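/- arXiv:2302.06190 — 5 statements merged into one kernel-verified Lean document; each statement's English description precedes it below -/
import Mathlib

section
/- Let f, g : ℂ → ℂ, τ ∈ ℂ, n ∈ ℕ, and a₀, …, a_n ∈ ℂ. Suppose that along the punctured neighborhood filter 𝓝[≠]τ: (i) ‖f(t)‖ → +∞, and (ii) g(t) − ∑_{j=0}^{n} a_j·f(t)^j → 0. Then for every k ∈ {0, …, n}, the quotient (g(t) − ∑_{j=k+1}^{n} a_j·f(t)^j)/f(t)^k tends to a_k along 𝓝[≠]τ. -/
open Filter Topology

/-- The coefficient formulas for a generalized asymptote: if `‖f(t)‖ → +∞` and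
`g(t) − ∑_{j=0}^n aⱼ f(t)ʲ → 0` as `t → τ` (punctured), then for each `k ≤ n`,
`(g(t) − ∑_{j=k+1}^n aⱼ f(t)ʲ)/f(t)ᵏ → aₖ` as `t → τ` (punctured). -/
theorem asymptote_coeffs_by_successive_limits
    (f g : ℂ → ℂ) (τ : ℂ) (n : ℕ) (a : ℕ → ℂ)
    (hf : Tendsto (fun t => ‖f t‖) (𝓝[≠] τ) atTop)
    (hg : Tendsto (fun t => g t - ∑ j ∈ Finset.range (n + 1), a j * f t ^ j)
      (𝓝[≠] τ) (𝓝 0)) :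
    ∀ k ≤ n,
      Tendsto (fun t => (g t - ∑ j ∈ Finset.Ioc k n, a j * f t ^ j) / f t ^ k)
        (𝓝[≠] τ) (𝓝 (a k)) := by
  intro k hk
  set E : ℂ → ℂ := fun t => g t - ∑ j ∈ Finset.range (n + 1), a j * f t ^ j with hE
  have hf1 : ∀ᶠ t in 𝓝[≠] τ, 1 ≤ ‖f t‖ := hf.eventually_ge_atTop 1
  -- E / f^k → 0
  have h1 : Tendsto (fun t => E t / f t ^ k) (𝓝[≠] τ) (𝓝 0) := by
    refine squeeze_zero_norm' ?_ (by simpa using hg.norm : Tendsto (fun t => ‖E t‖) (𝓝[≠] τ) (𝓝 0))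
    filter_upwards [hf1] with t ht
    rw [norm_div, norm_pow]
    have h0 : (0:ℝ) < ‖f t‖ ^ k := pow_pos (lt_of_lt_of_le one_pos ht) k
    rw [div_le_iff₀ h0]
    calc ‖E t‖ = ‖E t‖ * 1 := (mul_one _).symm
      _ ≤ ‖E t‖ * ‖f t‖ ^ k := by
          exact mul_le_mul_of_nonneg_left (one_le_pow₀ ht) (norm_nonneg _)
  -- each tail term → 0
  have h2 : Tendsto (fun t => ∑ j ∈ Finset.range k, a j / f t ^ (k - j))
      (𝓝[≠] τ) (𝓝 0) := by
    have : (0:ℂ) = ∑ j ∈ Finset.range k, 0 := by simp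
    rw [this]
    apply tendsto_finset_sum
    intro j hj
    rw [Finset.mem_range] at hj
    rw [tendsto_zero_iff_norm_tendsto_zero]
    have hpow : Tendsto (fun t => ‖f t‖ ^ (k - j)) (𝓝[≠] τ) atTop :=
      (tendsto_pow_atTop (by omega)).comp hf
    have := (tendsto_const_nhds (x := ‖a j‖) (f := 𝓝[≠] τ)).div_atTop hpow
    refine this.congr fun t => ?_
    rw [norm_div, norm_pow]
  have h3 : Tendsto (fun t => E t / f t ^ k +
      (a k + ∑ j ∈ Finset.range k, a j / f t ^ (k - j))) (𝓝[≠] τ) (𝓝 (a k)) := by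
    have := h1.add ((tendsto_const_nhds (x := a k) (f := 𝓝[≠] τ)).add h2)
    simpa using this
  refine h3.congr' ?_
  filter_upwards [hf1] with t ht
  have hF : f t ≠ 0 := by
    intro h; rw [h] at ht; simp at ht; linarith
  have hsplit : ∑ j ∈ Finset.range (n + 1), a j * f t ^ j
      = (∑ j ∈ Finset.range (k + 1), a j * f t ^ j)
        + ∑ j ∈ Finset.Ioc k n, a j * f t ^ j := by
    have h1 : Finset.Ioc k n = Finset.Ico (k + 1) (n + 1) := by
      ext x; simp [Nat.lt_succ_iff]
    rw [h1]; simp only [Finset.range_eq_Ico]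
    exact (Finset.sum_Ico_consecutive (fun j => a j * f t ^ j)
      (Nat.zero_le (k + 1)) (by omega)).symm
  have hnum : g t - ∑ j ∈ Finset.Ioc k n, a j * f t ^ j
      = E t + ∑ j ∈ Finset.range (k + 1), a j * f t ^ j := by
    rw [hE]; simp only [hsplit]; ring
  rw [hnum, add_div, Finset.sum_div, Finset.sum_range_succ,
    mul_div_assoc (a k), div_self (pow_ne_zero _ hF), mul_one, add_comm _ (a k)]
  congr 1
  congr 1
  apply Finset.sum_congr rfl
  intro j hj
  rw [Finset.mem_range] at hj
  have hpk : f t ^ k = f t ^ (k - j) * f t ^ j := by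
    rw [← pow_add]; congr 1; omega
  rw [hpk, mul_div_mul_right _ _ (pow_ne_zero _ hF)]
end

section
/- Let ℘₁, ℘₂ : ℂ → ℂ, τ ∈ ℂ, natural numbers n₁ ≥ 1 and n₂ ≤ n₁, coefficients a₀, …, a_{n₂} ∈ ℂ, and a function u : ℂ → ℂ such that u(t)^{n₁} = ℘₁(t) for all t in some punctured neighborhood of τ. Suppose that along the punctured neighborhood filter 𝓝[≠]τ: (i) ‖℘₁(t)‖ → +∞, and (ii) ℘₂(t) − ∑_{j=0}^{n₂} a_j·u(t)^j → 0. Define Q̃ : ℂ → ℂ × ℂ by Q̃(s) = (s^{n₁}, ∑_{j=0}^{n₂} a_j·s^j). Then, along 𝓝[≠]τ, Metric.infDist((℘₁(t), ℘₂(t)), Set.range Q̃) → 0 and ‖(℘₁(t), ℘₂(t))‖ → +∞. -/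
open Filter Topology

/-- The curve parametrized by `Q̃(s) = (s^{n₁}, ∑_{j=0}^{n₂} aⱼ sʲ)` approaches the curve
parametrized by `(℘₁, ℘₂)` at the infinity branch corresponding to the pole `τ`, where `u`
is a branch of the `n₁`-th root of `℘₁` near `τ`. -/
theorem asymptote_approaches_curve
    (p1 p2 : ℂ → ℂ) (τ : ℂ) (n1 n2 : ℕ) (hn1 : 1 ≤ n1) (hn21 : n2 ≤ n1)
    (a : ℕ → ℂ) (u : ℂ → ℂ)
    (hu : ∀ᶠ t in 𝓝[≠] τ, u t ^ n1 = p1 t)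
    (hp1 : Tendsto (fun t => ‖p1 t‖) (𝓝[≠] τ) atTop)
    (hp2 : Tendsto (fun t => p2 t - ∑ j ∈ Finset.range (n2 + 1), a j * u t ^ j)
      (𝓝[≠] τ) (𝓝 0)) :
    Tendsto (fun t => Metric.infDist ((p1 t, p2 t) : ℂ × ℂ)
        (Set.range (fun s : ℂ => ((s ^ n1, ∑ j ∈ Finset.range (n2 + 1), a j * s ^ j) : ℂ × ℂ))))
      (𝓝[≠] τ) (𝓝 0)
    ∧ Tendsto (fun t => ‖((p1 t, p2 t) : ℂ × ℂ)‖) (𝓝[≠] τ) atTop := by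
  constructor
  · have h1 : Tendsto (fun t => ‖p2 t - ∑ j ∈ Finset.range (n2 + 1), a j * u t ^ j‖)
        (𝓝[≠] τ) (𝓝 0) := by simpa using hp2.norm
    apply squeeze_zero' (Eventually.of_forall fun t => Metric.infDist_nonneg) ?_ h1
    filter_upwards [hu] with t ht
    calc Metric.infDist ((p1 t, p2 t) : ℂ × ℂ) _
        ≤ dist ((p1 t, p2 t) : ℂ × ℂ)
            ((u t ^ n1, ∑ j ∈ Finset.range (n2 + 1), a j * u t ^ j) : ℂ × ℂ) :=
          Metric.infDist_le_dist_of_mem (Set.mem_range_self (u t))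
      _ = ‖p2 t - ∑ j ∈ Finset.range (n2 + 1), a j * u t ^ j‖ := by
          rw [Prod.dist_eq, ht]
          simp [dist_eq_norm]
  · refine tendsto_atTop_mono (fun t => ?_) hp1
    exact (norm_fst_le ((p1 t, p2 t) : ℂ × ℂ))
end

section
/- Let τ ∈ ℂ and let f, g : ℂ → ℂ be meromorphic at τ (MeromorphicAt), with the order of f at τ negative (f has a pole at τ) and the order of g at τ nonnegative. Then there exists L ∈ ℂ such that, along the punctured neighborhood filter 𝓝[≠]τ: g(t) → L, ‖f(t)‖ → +∞, and Metric.infDist((f(t), g(t)), {(x, y) ∈ ℂ × ℂ : y = L}) → 0. -/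
open Filter Topology

lemma Metric.infDist_prod_snd_eq {α β : Type*} [PseudoMetricSpace α] [PseudoMetricSpace β]
    (x : α) (y b : β) : infDist (x, y) {p : α × β | p.2 = b} = dist y b := by
  refine le_antisymm ?_ ?_
  · simpa [Prod.dist_eq] using
      infDist_le_dist_of_mem (x := (x, y)) (show (x, b) ∈ {p : α × β | p.2 = b} from rfl)
  · refine (le_infDist (s := {p : α × β | p.2 = b}) ⟨(x, b), rfl⟩).2 fun p hp => ?_
    rw [Prod.dist_eq, ← hp]
    exact le_max_right _ _

theorem horizontal_asymptote_of_meromorphic_parametrization_general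
    (τ : ℂ) (f g : ℂ → ℂ)
    (hg : MeromorphicAt g τ)
    (hford : meromorphicOrderAt f τ < 0) (hgord : 0 ≤ meromorphicOrderAt g τ) :
    ∃ L : ℂ,
      Tendsto g (𝓝[≠] τ) (𝓝 L)
      ∧ Tendsto (fun t => ‖f t‖) (𝓝[≠] τ) atTop
      ∧ Tendsto (fun t => Metric.infDist ((f t, g t) : ℂ × ℂ)
            {p : ℂ × ℂ | p.2 = L}) (𝓝[≠] τ) (𝓝 0) := by
  obtain ⟨L, hL⟩ := tendsto_nhds_of_meromorphicOrderAt_nonneg hg hgord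
  refine ⟨L, hL, ?_, ?_⟩
  · exact tendsto_norm_atTop_iff_cobounded.2 (tendsto_cobounded_of_meromorphicOrderAt_neg hford)
  · simpa only [Metric.infDist_prod_snd_eq] using tendsto_iff_dist_tendsto_zero.1 hL

/-- A pole `τ` of `f` that is not a pole of `g` (both meromorphic at `τ`) yields a
horizontal line `y = L` as a g-asymptote of the curve parametrized by `(f, g)`. -/
theorem horizontal_asymptote_of_meromorphic_parametrization
    (τ : ℂ) (f g : ℂ → ℂ)
    (hf : MeromorphicAt f τ) (hg : MeromorphicAt g τ)
    (hford : meromorphicOrderAt f τ < 0) (hgord : 0 ≤ meromorphicOrderAt g τ) :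
    ∃ L : ℂ,
      Tendsto g (𝓝[≠] τ) (𝓝 L)
      ∧ Tendsto (fun t => ‖f t‖) (𝓝[≠] τ) atTop
      ∧ Tendsto (fun t => Metric.infDist ((f t, g t) : ℂ × ℂ)
            {p : ℂ × ℂ | p.2 = L}) (𝓝[≠] τ) (𝓝 0) :=
  horizontal_asymptote_of_meromorphic_parametrization_general τ f g hg hford hgord
end

section
/- Let τ ∈ ℂ and let f, g : ℂ → ℂ be meromorphic at τ (MeromorphicAt), with the order of g at τ negative (g has a pole at τ) and the order of f at τ nonnegative. Then there exists L ∈ ℂ such that, along the punctured neighborhood filter 𝓝[≠]τ: f(t) → L, ‖g(t)‖ → +∞, and Metric.infDist((f(t), g(t)), {(x, y) ∈ ℂ × ℂ : x = L}) → 0. -/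
open Filter Topology

section

variable {α β γ : Type*} [PseudoMetricSpace α] [PseudoMetricSpace β]

theorem Metric.infDist_setOf_fst_eq_le (p : α × β) (a : α) :
    Metric.infDist p {q : α × β | q.1 = a} ≤ dist p.1 a :=
  calc Metric.infDist p {q : α × β | q.1 = a}
      ≤ dist p (a, p.2) := Metric.infDist_le_dist_of_mem rfl
    _ = dist p.1 a := by simp [Prod.dist_eq]

theorem Filter.Tendsto.infDist_setOf_fst_eq {l : Filter γ} {u : γ → α} {v : γ → β} {a : α}
    (hu : Tendsto u l (𝓝 a)) :
    Tendsto (fun t => Metric.infDist (u t, v t) {q : α × β | q.1 = a}) l (𝓝 0) :=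
  squeeze_zero (fun _ => Metric.infDist_nonneg)
    (fun t => Metric.infDist_setOf_fst_eq_le (u t, v t) a)
    (tendsto_iff_dist_tendsto_zero.mp hu)

end

theorem vertical_asymptote_of_meromorphic_parametrization_general
    (τ : ℂ) (f g : ℂ → ℂ)
    (hf : MeromorphicAt f τ)
    (hgord : meromorphicOrderAt g τ < 0) (hford : 0 ≤ meromorphicOrderAt f τ) :
    ∃ L : ℂ,
      Tendsto f (𝓝[≠] τ) (𝓝 L)
      ∧ Tendsto (fun t => ‖g t‖) (𝓝[≠] τ) atTop
      ∧ Tendsto (fun t => Metric.infDist ((f t, g t) : ℂ × ℂ)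
            {p : ℂ × ℂ | p.1 = L}) (𝓝[≠] τ) (𝓝 0) := by
  obtain ⟨L, hL⟩ := tendsto_nhds_of_meromorphicOrderAt_nonneg hf hford
  exact ⟨L, hL, tendsto_norm_atTop_iff_cobounded.mpr
    (tendsto_cobounded_of_meromorphicOrderAt_neg hgord), hL.infDist_setOf_fst_eq⟩

/-- A pole `τ` of `g` that is not a pole of `f` (both meromorphic at `τ`) yields a
vertical line `x = L` as a g-asymptote of the curve parametrized by `(f, g)`. -/
theorem vertical_asymptote_of_meromorphic_parametrization
    (τ : ℂ) (f g : ℂ → ℂ)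
    (hf : MeromorphicAt f τ) (hg : MeromorphicAt g τ)
    (hgord : meromorphicOrderAt g τ < 0) (hford : 0 ≤ meromorphicOrderAt f τ) :
    ∃ L : ℂ,
      Tendsto f (𝓝[≠] τ) (𝓝 L)
      ∧ Tendsto (fun t => ‖g t‖) (𝓝[≠] τ) atTop
      ∧ Tendsto (fun t => Metric.infDist ((f t, g t) : ℂ × ℂ)
            {p : ℂ × ℂ | p.1 = L}) (𝓝[≠] τ) (𝓝 0) :=
  vertical_asymptote_of_meromorphic_parametrization_general τ f g hf hgord hford
end

section
/- Let n ≥ 1 be a natural number, m ≤ n, and a₀, a₁, …, a_m ∈ ℂ; let S = {j : 1 ≤ j ≤ m and a_j ≠ 0}, and define φ : ℂ → ℂ × ℂ by φ(t) = (t^n, ∑_{j=0}^{m} a_j·t^j). Then the following are equivalent: (i) there exists a finite set F ⊆ ℂ such that φ is injective on ℂ \ F; (ii) the greatest common divisor of n together with all elements of S equals 1 (where for S = ∅ this gcd is n). Moreover, if d := gcd(n, gcd S) > 1 and ζ is a primitive d-th root of unity, then φ(ζ·t) = φ(t) for every t ∈ ℂ. -/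
/-!
Write the second coordinate as a polynomial `p`. Two points with the same `tⁿ ≠ 0` differ by an
`n`-th root of unity `ω`, and then `t` is a root of `p(ωX) - p(X)`. This polynomial vanishes
exactly when `ωʲ = 1` for every exponent `j` of `p`, so, together with `ωⁿ = 1`, exactly when
`ω^d = 1`. If `d = 1`, the roots of the finitely many nonzero `p(ωX) - p(X)` form the exceptional
set. If `d > 1`, a primitive `d`-th root of unity `ζ` gives `φ(ζt) = φ(t)` for all `t`, so no
cofinite set is mapped injectively.
-/

open Polynomial

lemma pow_finset_gcd_eq_one_iff {M ι : Type*} [Monoid M] (x : M) (s : Finset ι) (f : ι → ℕ) :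
    x ^ s.gcd f = 1 ↔ ∀ i ∈ s, x ^ f i = 1 := by
  simp only [← orderOf_dvd_iff_pow_eq_one, Finset.dvd_gcd_iff]

namespace Polynomial

lemma comp_C_mul_X_eq_self_iff {R : Type*} [CommRing R] [IsDomain R] (p : R[X]) (r : R) :
    p.comp (C r * X) = p ↔ ∀ j, p.coeff j ≠ 0 → r ^ j = 1 := by
  simp only [Polynomial.ext_iff, comp_C_mul_X_coeff]
  exact forall_congr' fun j => by by_cases hj : p.coeff j = 0 <;> simp [hj]

lemma pow_eval_mul_eq_of_comp_C_mul_X_eq {R : Type*} [CommSemiring R] {n : ℕ} {p : R[X]} {ζ : R}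
    (hζn : ζ ^ n = 1) (hζp : p.comp (C ζ * X) = p) (t : R) :
    ((ζ * t) ^ n, p.eval (ζ * t)) = (t ^ n, p.eval t) := by
  have hζt := congrArg (eval t) hζp
  simp only [eval_comp, eval_mul, eval_C, eval_X] at hζt
  rw [mul_pow, hζn, one_mul, hζt]

theorem exists_finset_injOn_compl_pow_eval {K : Type*} [Field K] {n : ℕ} (hn : n ≠ 0) (p : K[X])
    (h : ∀ ω : K, ω ^ n = 1 → p.comp (C ω * X) = p → ω = 1) :
    ∃ F : Finset K, Set.InjOn (fun t => (t ^ n, p.eval t)) (↑F)ᶜ := by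
  classical
  refine ⟨(nthRoots n (1 : K)).toFinset.biUnion fun ω => (p.comp (C ω * X) - p).roots.toFinset,
    fun s _ t ht hst => ?_⟩
  obtain ⟨hpow, heval⟩ := Prod.mk.inj hst
  rcases eq_or_ne t 0 with rfl | ht0
  · simpa [zero_pow hn, hn] using hpow
  set ω := s / t
  have hωn : ω ^ n = 1 := by rw [div_pow, hpow, div_self (pow_ne_zero n ht0)]
  have hroot : (p.comp (C ω * X) - p).IsRoot t := by
    simp [eval_comp, ω, div_mul_cancel₀ s ht0, heval]
  have hωp : p.comp (C ω * X) = p := by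
    by_contra hne
    refine ht (Finset.mem_biUnion.2 ⟨ω, ?_, ?_⟩)
    · simpa [mem_nthRoots (Nat.pos_of_ne_zero hn)] using hωn
    · exact Multiset.mem_toFinset.2 (mem_roots'.2 ⟨sub_ne_zero.2 hne, hroot⟩)
  exact (div_eq_one_iff_eq ht0).1 (h ω hωn hωp)

end Polynomial

theorem not_exists_finset_injOn_compl_of_mul_invariant {M β : Type*} [MonoidWithZero M]
    [IsCancelMulZero M] [Infinite M] {f : M → β} {ζ : M} (hζ0 : ζ ≠ 0) (hζ1 : ζ ≠ 1) (hf : ∀ t, f (ζ * t) = f t) :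
    ¬ ∃ F : Finset M, Set.InjOn f (↑F)ᶜ := by
  rintro ⟨F, hF⟩
  have hfin : (↑F ∪ (ζ * ·) ⁻¹' ↑F ∪ {0} : Set M).Finite :=
    (F.finite_toSet.union (F.finite_toSet.preimage (mul_right_injective₀ hζ0).injOn)).union
      (Set.finite_singleton 0)
  obtain ⟨t, ht⟩ := hfin.exists_notMem
  simp only [Set.mem_union, Set.mem_preimage, Finset.mem_coe, Set.mem_singleton_iff,
    not_or] at ht
  obtain ⟨⟨htF, hζtF⟩, ht0⟩ := ht
  have hζt : ζ * t = 1 * t := (hF hζtF htF (hf t)).trans (one_mul t).symm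
  exact hζ1 (mul_right_cancel₀ ht0 hζt)

lemma pow_gcd_exponents_eq_one_iff {R : Type*} [CommRing R] [IsDomain R] [DecidableEq R] (ω : R)
    (n m : ℕ) (a : ℕ → R) :
    ω ^ Nat.gcd n (((Finset.Icc 1 m).filter (fun j => a j ≠ 0)).gcd id) = 1 ↔
      ω ^ n = 1 ∧ (∑ j ∈ Finset.range (m + 1), C (a j) * X ^ j).comp (C ω * X) =
        ∑ j ∈ Finset.range (m + 1), C (a j) * X ^ j := by
  have hcoeff : ∀ j, (∑ i ∈ Finset.range (m + 1), C (a i) * X ^ i).coeff j =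
      if j ≤ m then a j else 0 := fun j => by
    simp [finsetSum_coeff]
  rw [pow_gcd_eq_one, pow_finset_gcd_eq_one_iff, comp_C_mul_X_eq_self_iff]
  refine and_congr_right fun _ => ⟨fun h j hj => ?_, fun h j hj => ?_⟩
  · rw [hcoeff] at hj
    split_ifs at hj with hjm
    · rcases Nat.eq_zero_or_pos j with rfl | hj0
      · exact pow_zero ω
      · exact h j (Finset.mem_filter.2 ⟨Finset.mem_Icc.2 ⟨hj0, hjm⟩, hj⟩)
    · exact absurd rfl hj
  · obtain ⟨hjm, hj⟩ := Finset.mem_filter.1 hj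
    exact h j (by rwa [hcoeff, if_pos (Finset.mem_Icc.1 hjm).2])

theorem proper_parametrization_iff_gcd_eq_one_general
    (n m : ℕ) (hn : 1 ≤ n) (a : ℕ → ℂ) :
    ((∃ F : Finset ℂ, Set.InjOn
        (fun t : ℂ => ((t ^ n, ∑ j ∈ Finset.range (m + 1), a j * t ^ j) : ℂ × ℂ))
        ((↑F : Set ℂ)ᶜ))
      ↔ Nat.gcd n (((Finset.Icc 1 m).filter (fun j => a j ≠ 0)).gcd id) = 1)
    ∧ (∀ ζ : ℂ,
        1 < Nat.gcd n (((Finset.Icc 1 m).filter (fun j => a j ≠ 0)).gcd id) →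
        IsPrimitiveRoot ζ (Nat.gcd n (((Finset.Icc 1 m).filter (fun j => a j ≠ 0)).gcd id)) →
        ∀ t : ℂ,
          ((( ζ * t) ^ n, ∑ j ∈ Finset.range (m + 1), a j * (ζ * t) ^ j) : ℂ × ℂ)
          = ((t ^ n, ∑ j ∈ Finset.range (m + 1), a j * t ^ j) : ℂ × ℂ)) := by
  set p : ℂ[X] := ∑ j ∈ Finset.range (m + 1), C (a j) * X ^ j
  have heval : ∀ t, ∑ j ∈ Finset.range (m + 1), a j * t ^ j = p.eval t := fun t => by
    simp [p, eval_finsetSum]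
  simp only [heval]
  set d := Nat.gcd n (((Finset.Icc 1 m).filter (fun j => a j ≠ 0)).gcd id)
  have hd : 0 < d := Nat.gcd_pos_of_pos_left _ hn
  have hinv : ∀ ζ : ℂ, ζ ^ d = 1 → ∀ t, ((ζ * t) ^ n, p.eval (ζ * t)) = (t ^ n, p.eval t) :=
    fun ζ hζ =>
      let ⟨hζn, hζp⟩ := (pow_gcd_exponents_eq_one_iff ζ n m a).1 hζ
      pow_eval_mul_eq_of_comp_C_mul_X_eq hζn hζp
  refine ⟨⟨fun hF => ?_, fun hd1 => ?_⟩, fun ζ _ hζ => hinv ζ hζ.pow_eq_one⟩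
  · by_contra hd1
    have hζ := Complex.isPrimitiveRoot_exp d hd.ne'
    exact not_exists_finset_injOn_compl_of_mul_invariant (hζ.ne_zero hd.ne')
      (hζ.ne_one (by omega)) (hinv _ hζ.pow_eq_one) hF
  · refine exists_finset_injOn_compl_pow_eval (by omega) p fun ω hωn hωp => ?_
    have hω : ω ^ d = 1 := (pow_gcd_exponents_eq_one_iff ω n m a).2 ⟨hωn, hωp⟩
    rwa [hd1, pow_one] at hω

/-- Properness criterion for the parametrization `φ(t) = (tⁿ, ∑_{j=0}^m aⱼ tʲ)`:
`φ` is injective outside some finite set if and only if the gcd of `n` together with the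
exponents `1 ≤ j ≤ m` with `aⱼ ≠ 0` equals `1`; moreover, if that gcd `d` exceeds `1` and
`ζ` is a primitive `d`-th root of unity, then `φ(ζ·t) = φ(t)` for all `t`. -/
theorem proper_parametrization_iff_gcd_eq_one
    (n m : ℕ) (hn : 1 ≤ n) (hmn : m ≤ n) (a : ℕ → ℂ) :
    ((∃ F : Finset ℂ, Set.InjOn
        (fun t : ℂ => ((t ^ n, ∑ j ∈ Finset.range (m + 1), a j * t ^ j) : ℂ × ℂ))
        ((↑F : Set ℂ)ᶜ))
      ↔ Nat.gcd n (((Finset.Icc 1 m).filter (fun j => a j ≠ 0)).gcd id) = 1)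
    ∧ (∀ ζ : ℂ,
        1 < Nat.gcd n (((Finset.Icc 1 m).filter (fun j => a j ≠ 0)).gcd id) →
        IsPrimitiveRoot ζ (Nat.gcd n (((Finset.Icc 1 m).filter (fun j => a j ≠ 0)).gcd id)) →
        ∀ t : ℂ,
          ((( ζ * t) ^ n, ∑ j ∈ Finset.range (m + 1), a j * (ζ * t) ^ j) : ℂ × ℂ)
          = ((t ^ n, ∑ j ∈ Finset.range (m + 1), a j * t ^ j) : ℂ × ℂ)) :=
  proper_parametrization_iff_gcd_eq_one_general n m hn a
end
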